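/- Let X₁, X₂ be independent exponential random variables with mean 1, fix σ², b₁, b₂ > 0 and N₁, N₂ > 0 with N₁ ≠ N₂, and fix q₁, q₂ > 0. For ρ > 0 set P₁ = q₁ρ, P₂ = q₂ρ and γ_k = X_k·P_k/σ². Then lim_{ρ→∞} (P₁P₂/σ⁴)·ℙ( N₁log₂(1+γ₁) < b₁ and N₁log₂(1+γ₁)+N₂log₂(1+γ₂) < b₁+b₂ ) = (N₂/(N₂−N₁))·(2^{b₁/N₁ + b₂/N₂} − 2^{(b₁+b₂)/N₂}) − 2^{b₁/N₁} + 1. -/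

import Mathlib

/-!
Put `a = P₁/σ²`, `c = P₂/σ²`, `T = 2^{b₁/N₁}` and let
`g(u) = 2^{(b₁ + b₂ - N₁ log₂(1+u))/N₂} - 1` be the largest second-round SNR that still leaves the
accumulated information short of `b₁ + b₂` after a first-round SNR `u`. The outage event is
`{a X₁ < T - 1, c X₂ < g(a X₁)}`, so for independent `Exp(1)` gains its probability is
`∫₀^{(T-1)/a} e^{-x} (1 - e^{-g(a x)/c}) dx`. Substituting `u = a x`,
`a c · p_out = ∫₀^{T-1} c (1 - e^{-g(u)/c}) e^{-u/a} du`, whose integrand is dominated by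
`g ≤ 2^{(b₁+b₂)/N₂}` and tends to `g(u)` as `a, c → ∞`. The limit `∫₀^{T-1} g` is elementary because
`g(u) = 2^{(b₁+b₂)/N₂} (1+u)^{-N₁/N₂} - 1`.
-/

open MeasureTheory ProbabilityTheory Real Filter Set Topology

instance : IsProbabilityMeasure (expMeasure 1) := isProbabilityMeasure_expMeasure one_pos

theorem expMeasure_eq_withDensity (r : ℝ) :
    expMeasure r = volume.withDensity (exponentialPDF r) := rfl

theorem expMeasure_one_Iio (m : ℝ) : expMeasure 1 (Iio m) = ENNReal.ofReal (1 - exp (-m)) := by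
  rw [expMeasure_eq_withDensity, withDensity_apply _ measurableSet_Iio,
    setLIntegral_congr Iio_ae_eq_Iic,
    lintegral_exponentialPDF_eq_antiDeriv one_pos, one_mul]
  split_ifs with hm
  · rfl
  · rw [ENNReal.ofReal_zero, ENNReal.ofReal_of_nonpos]
    linarith [one_lt_exp_iff.2 (neg_pos.2 (not_le.1 hm))]

theorem ae_nonneg_expMeasure_one : ∀ᵐ x ∂expMeasure 1, 0 ≤ x := by
  simp only [ae_iff, not_le]
  exact (expMeasure_one_Iio 0).trans (by simp)

theorem measurableSet_fst_lt_and_snd_lt {w : ℝ} {h : ℝ → ℝ} (hh : Measurable h) :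
    MeasurableSet {p : ℝ × ℝ | p.1 < w ∧ p.2 < h p.1} :=
  (measurableSet_lt measurable_fst measurable_const).inter
    (measurableSet_lt measurable_snd (hh.comp measurable_fst))

theorem prod_expMeasure_fst_lt_and_snd_lt {w : ℝ} {h : ℝ → ℝ} (hw : 0 ≤ w) (hh : Measurable h)
    (hh0 : ∀ x ∈ Ioo 0 w, 0 ≤ h x) :
    ((expMeasure 1).prod (expMeasure 1) {p : ℝ × ℝ | p.1 < w ∧ p.2 < h p.1}).toReal =
      ∫ x in 0..w, exp (-x) * (1 - exp (-h x)) := by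
  have hsection : ∀ x, expMeasure 1 (Prod.mk x ⁻¹' {p : ℝ × ℝ | p.1 < w ∧ p.2 < h p.1}) =
      (Iio w).indicator (fun x => ENNReal.ofReal (1 - exp (-h x))) x := by
    intro x
    by_cases hx : x < w
    · simp [hx, ← expMeasure_one_Iio, Iio]
    · simp [hx]
  have hdensity : ∀ x, exponentialPDF 1 x * ENNReal.ofReal (1 - exp (-h x)) =
      (Ici 0).indicator (fun x => ENNReal.ofReal (exp (-x) * (1 - exp (-h x)))) x := by
    intro x
    by_cases hx : 0 ≤ x
    · rw [indicator_of_mem (mem_Ici.2 hx), exponentialPDF_of_nonneg hx]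
      simp only [one_mul]
      rw [← ENNReal.ofReal_mul (exp_pos _).le]
    · rw [indicator_of_notMem (notMem_Ici.2 (not_le.1 hx)), exponentialPDF_of_neg (not_le.1 hx),
        zero_mul]
  rw [Measure.prod_apply (measurableSet_fst_lt_and_snd_lt hh), lintegral_congr hsection,
    lintegral_indicator measurableSet_Iio,
    expMeasure_eq_withDensity,
    setLIntegral_withDensity_eq_setLIntegral_mul _ (f := exponentialPDF 1)
      (measurable_exponentialPDFReal 1).ennreal_ofReal (by fun_prop) measurableSet_Iio]
  simp only [Pi.mul_apply, hdensity]
  rw [lintegral_indicator measurableSet_Ici, Measure.restrict_restrict measurableSet_Ici,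
    Ici_inter_Iio, setLIntegral_congr Ioo_ae_eq_Ico.symm, ← integral_eq_lintegral_of_nonneg_ae,
    intervalIntegral.integral_of_le hw, integral_Ioc_eq_integral_Ioo]
  · exact ae_restrict_of_forall_mem measurableSet_Ioo fun x hx => mul_nonneg (exp_pos _).le
      (sub_nonneg.2 (exp_le_one_iff.2 (neg_nonpos.2 (hh0 x hx))))
  · exact (by fun_prop : Measurable _).aestronglyMeasurable

theorem mul_one_sub_exp_neg_div_le {c : ℝ} (hc : 0 < c) (t : ℝ) :
    c * (1 - exp (-(t / c))) ≤ t := by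
  have := add_one_le_exp (-(t / c))
  calc c * (1 - exp (-(t / c))) ≤ c * (t / c) := by gcongr; linarith
    _ = t := mul_div_cancel₀ t hc.ne'

theorem mul_one_sub_exp_neg_div_nonneg {c t : ℝ} (hc : 0 ≤ c) (ht : 0 ≤ t) :
    0 ≤ c * (1 - exp (-(t / c))) := by
  have : exp (-(t / c)) ≤ 1 := exp_le_one_iff.2 (neg_nonpos.2 (div_nonneg ht hc))
  exact mul_nonneg hc (by linarith)

theorem tendsto_mul_one_sub_exp_neg_div (t : ℝ) :
    Tendsto (fun c : ℝ => c * (1 - exp (-(t / c)))) atTop (𝓝 t) := by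
  rcases eq_or_ne t 0 with rfl | ht
  · simp
  have hslope : Tendsto (fun s : ℝ => s⁻¹ * (1 - exp (-s))) (𝓝[≠] 0) (𝓝 1) := by
    simpa [neg_add_eq_sub] using ((hasDerivAt_neg 0).exp.neg).tendsto_slope_zero
  have hs : Tendsto (fun c => t / c) atTop (𝓝[≠] 0) :=
    tendsto_nhdsWithin_iff.2 ⟨tendsto_const_nhds.div_atTop tendsto_id,
      (eventually_gt_atTop 0).mono fun c hc => div_ne_zero ht hc.ne'⟩
  refine (mul_one t ▸ (hslope.comp hs).const_mul t).congr' ?_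
  filter_upwards [eventually_gt_atTop 0] with c hc
  simp only [Function.comp_apply]
  field_simp

theorem mul_integral_exp_neg_mul_one_sub_exp {a : ℝ} (ha : a ≠ 0) (c L : ℝ) (G : ℝ → ℝ) :
    a * c * ∫ x in 0..L / a, exp (-x) * (1 - exp (-(G (a * x) / c))) =
      ∫ u in 0..L, c * (1 - exp (-(G u / c))) * exp (-(u / a)) := by
  have := intervalIntegral.mul_integral_comp_mul_left (a := 0) (b := L / a)
    (f := fun u => c * (1 - exp (-(G u / c))) * exp (-(u / a))) (c := a)
  rw [mul_zero, mul_div_cancel₀ L ha] at this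
  rw [← this, mul_assoc, ← intervalIntegral.integral_const_mul]
  refine congrArg (a * ·) (intervalIntegral.integral_congr fun x _ => ?_)
  simp only [mul_div_cancel_left₀ x ha]
  ring

theorem tendsto_integral_mul_one_sub_exp_neg {ι : Type*} {l : Filter ι} [l.IsCountablyGenerated]
    {a c : ι → ℝ} (ha : Tendsto a l atTop) (hc : Tendsto c l atTop) {G : ℝ → ℝ} {L B : ℝ}
    (hL : 0 ≤ L) (hG : Measurable G) (hG0 : ∀ u ∈ Ioc 0 L, 0 ≤ G u)
    (hGB : ∀ u ∈ Ioc 0 L, G u ≤ B) :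
    Tendsto (fun i => ∫ u in 0..L, c i * (1 - exp (-(G u / c i))) * exp (-(u / a i))) l
      (𝓝 (∫ u in 0..L, G u)) := by
  refine intervalIntegral.tendsto_integral_filter_of_dominated_convergence (fun _ => B) ?_ ?_
    intervalIntegrable_const ?_
  · exact Eventually.of_forall fun i => (by fun_prop : Measurable _).aestronglyMeasurable
  · filter_upwards [ha.eventually_gt_atTop 0, hc.eventually_gt_atTop 0] with i hai hci
    refine ae_of_all _ fun u hu => ?_
    rw [uIoc_of_le hL] at hu
    have h_nonneg := mul_one_sub_exp_neg_div_nonneg hci.le (hG0 u hu)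
    have h_le := mul_one_sub_exp_neg_div_le hci (G u)
    have h_exp : exp (-(u / a i)) ≤ 1 :=
      exp_le_one_iff.2 (neg_nonpos.2 (div_nonneg hu.1.le hai.le))
    rw [norm_of_nonneg (by positivity)]
    calc _ ≤ G u * 1 := mul_le_mul h_le h_exp (exp_pos _).le (hG0 u hu)
      _ ≤ B := by linarith [hGB u hu]
  · refine ae_of_all _ fun u _ => ?_
    have h_exp : Tendsto (fun i => exp (-(u / a i))) l (𝓝 1) := by
      have h0 : Tendsto (fun i => -(u / a i)) l (𝓝 0) := by
        simpa using (tendsto_const_nhds.div_atTop ha).neg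
      simpa [Function.comp_def] using (continuous_exp.tendsto 0).comp h0
    simpa using ((tendsto_mul_one_sub_exp_neg_div (G u)).comp hc).mul h_exp

theorem mul_logb_one_add_lt_iff {N s u : ℝ} (hN : 0 < N) (hu : -1 < u) :
    N * logb 2 (1 + u) < s ↔ u < 2 ^ (s / N) - 1 := by
  rw [mul_comm, ← lt_div_iff₀ hN, logb_lt_iff_lt_rpow one_lt_two (by linarith),
    lt_sub_iff_add_lt']

theorem integral_one_add_rpow {r L : ℝ} (hr : r ≠ -1) (hL : -1 < L) :
    ∫ u in 0..L, (1 + u) ^ r = ((1 + L) ^ (r + 1) - 1) / (r + 1) := by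
  rw [intervalIntegral.integral_comp_add_left (fun x => x ^ r), add_zero,
    integral_rpow (Or.inr ⟨hr, ?_⟩), one_rpow]
  rw [mem_uIcc]
  rintro (⟨h, -⟩ | ⟨h, -⟩) <;> linarith

noncomputable def secondRoundThreshold (N₁ N₂ b₁ b₂ u : ℝ) : ℝ :=
  2 ^ ((b₁ + b₂ - N₁ * logb 2 (1 + u)) / N₂) - 1

section SecondRoundThreshold

variable {N₁ N₂ b₁ b₂ u : ℝ}

theorem outage_two_rounds_iff {v : ℝ} (hN₁ : 0 < N₁) (hN₂ : 0 < N₂) (hu : -1 < u)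
    (hv : -1 < v) :
    (N₁ * logb 2 (1 + u) < b₁ ∧ N₁ * logb 2 (1 + u) + N₂ * logb 2 (1 + v) < b₁ + b₂) ↔
      u < 2 ^ (b₁ / N₁) - 1 ∧ v < secondRoundThreshold N₁ N₂ b₁ b₂ u := by
  rw [← mul_logb_one_add_lt_iff hN₁ hu, secondRoundThreshold,
    ← mul_logb_one_add_lt_iff hN₂ hv, lt_sub_iff_add_lt']

theorem secondRoundThreshold_eq_rpow (hu : -1 < u) :
    secondRoundThreshold N₁ N₂ b₁ b₂ u = 2 ^ ((b₁ + b₂) / N₂) * (1 + u) ^ (-(N₁ / N₂)) - 1 := by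
  rw [secondRoundThreshold, show (b₁ + b₂ - N₁ * logb 2 (1 + u)) / N₂
      = (b₁ + b₂) / N₂ + logb 2 (1 + u) * (-(N₁ / N₂)) by ring,
    rpow_add two_pos, rpow_mul zero_le_two, rpow_logb two_pos (by norm_num) (by linarith)]

theorem secondRoundThreshold_nonneg (hN₁ : 0 < N₁) (hN₂ : 0 < N₂) (hb₂ : 0 ≤ b₂) (hu : -1 < u)
    (hu' : u ≤ 2 ^ (b₁ / N₁) - 1) : 0 ≤ secondRoundThreshold N₁ N₂ b₁ b₂ u := by
  have : N₁ * logb 2 (1 + u) ≤ b₁ := by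
    rw [mul_comm, ← le_div_iff₀ hN₁, logb_le_iff_le_rpow one_lt_two (by linarith)]
    linarith
  exact sub_nonneg.2 (one_le_rpow one_le_two (div_nonneg (by linarith) hN₂.le))

theorem secondRoundThreshold_le (hN₁ : 0 < N₁) (hN₂ : 0 < N₂) (hu : 0 ≤ u) :
    secondRoundThreshold N₁ N₂ b₁ b₂ u ≤ 2 ^ ((b₁ + b₂) / N₂) - 1 := by
  have := logb_nonneg one_lt_two (le_add_of_nonneg_right hu)
  unfold secondRoundThreshold
  gcongr
  · exact one_le_two
  · nlinarith

theorem measurable_secondRoundThreshold (N₁ N₂ b₁ b₂ : ℝ) :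
    Measurable (secondRoundThreshold N₁ N₂ b₁ b₂) := by
  unfold secondRoundThreshold logb
  fun_prop

theorem integral_secondRoundThreshold (hN₁ : 0 < N₁) (hN₂ : 0 < N₂) (hNe : N₁ ≠ N₂) :
    ∫ u in 0..2 ^ (b₁ / N₁) - 1, secondRoundThreshold N₁ N₂ b₁ b₂ u =
      N₂ / (N₂ - N₁) * (2 ^ (b₁ / N₁ + b₂ / N₂) - 2 ^ ((b₁ + b₂) / N₂)) - 2 ^ (b₁ / N₁) + 1 := by
  set T : ℝ := 2 ^ (b₁ / N₁)
  have hT : 0 < T := by positivity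
  have hmem : ∀ u ∈ uIcc 0 (T - 1), -1 < u := by
    intro u hu
    rw [mem_uIcc] at hu
    rcases hu with ⟨h, -⟩ | ⟨h, -⟩ <;> linarith
  have hβ : -(N₁ / N₂) ≠ -1 := by
    rw [Ne, neg_inj, div_eq_one_iff_eq hN₂.ne']
    exact hNe
  have hA : 2 ^ ((b₁ + b₂) / N₂) * T ^ (-(N₁ / N₂) + 1) = 2 ^ (b₁ / N₁ + b₂ / N₂) := by
    rw [← rpow_mul zero_le_two, ← rpow_add two_pos]
    congr 1
    field_simp
    ring
  have hpow_integrable : IntervalIntegrable (fun u => (1 + u) ^ (-(N₁ / N₂))) volume 0 (T - 1) :=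
    ContinuousOn.intervalIntegrable fun u hu => ((continuousAt_id.const_add 1).rpow_const
      (Or.inl (by rw [id]; linarith [hmem u hu]))).continuousWithinAt
  rw [intervalIntegral.integral_congr
      (g := fun u => 2 ^ ((b₁ + b₂) / N₂) * (1 + u) ^ (-(N₁ / N₂)) - 1)
      fun u hu => secondRoundThreshold_eq_rpow (hmem u hu),
    intervalIntegral.integral_sub (hpow_integrable.const_mul _) intervalIntegrable_const,
    intervalIntegral.integral_const_mul, integral_one_add_rpow hβ (by linarith),
    add_sub_cancel, intervalIntegral.integral_const, smul_eq_mul, mul_one, sub_zero,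
    mul_div_assoc', mul_sub, hA, mul_one,
    show -(N₁ / N₂) + 1 = (N₂ - N₁) / N₂ by field_simp; ring]
  generalize (2 : ℝ) ^ (b₁ / N₁ + b₂ / N₂) = P
  generalize (2 : ℝ) ^ ((b₁ + b₂) / N₂) = A
  have : N₂ - N₁ ≠ 0 := sub_ne_zero.2 hNe.symm
  field_simp
  ring

end SecondRoundThreshold

theorem outage_prob_two_rounds_eq_integral {Ω : Type*} [MeasurableSpace Ω] (μ : Measure Ω)
    {X₁ X₂ : Ω → ℝ} (hX₁ : Measurable X₁) (hX₂ : Measurable X₂) (hindep : IndepFun X₁ X₂ μ)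
    (hlaw₁ : μ.map X₁ = expMeasure 1) (hlaw₂ : μ.map X₂ = expMeasure 1)
    {N₁ N₂ b₁ b₂ a c : ℝ} (hN₁ : 0 < N₁) (hN₂ : 0 < N₂) (hb₁ : 0 ≤ b₁) (hb₂ : 0 ≤ b₂)
    (ha : 0 < a) (hc : 0 < c) :
    (μ {ω | N₁ * logb 2 (1 + X₁ ω * a) < b₁ ∧
        N₁ * logb 2 (1 + X₁ ω * a) + N₂ * logb 2 (1 + X₂ ω * c) < b₁ + b₂}).toReal =
      ∫ x in 0..(2 ^ (b₁ / N₁) - 1) / a,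
        exp (-x) * (1 - exp (-(secondRoundThreshold N₁ N₂ b₁ b₂ (a * x) / c))) := by
  set T : ℝ := 2 ^ (b₁ / N₁)
  set h : ℝ → ℝ := fun x => secondRoundThreshold N₁ N₂ b₁ b₂ (a * x) / c
  have hT : 0 ≤ T - 1 := sub_nonneg.2 (one_le_rpow one_le_two (div_nonneg hb₁ hN₁.le))
  have hh : Measurable h :=
    ((measurable_secondRoundThreshold ..).comp (measurable_const_mul a)).div_const c
  have hjoint : μ.map (fun ω => (X₁ ω, X₂ ω)) = (expMeasure 1).prod (expMeasure 1) := by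
    rw [(indepFun_iff_map_prod_eq_prod_map_map' hX₁.aemeasurable hX₂.aemeasurable
      (hlaw₁ ▸ inferInstance) (hlaw₂ ▸ inferInstance)).1 hindep, hlaw₁, hlaw₂]
  have hnonneg : ∀ {X : Ω → ℝ}, Measurable X → μ.map X = expMeasure 1 → ∀ᵐ ω ∂μ, 0 ≤ X ω :=
    fun hX hlaw => ae_of_ae_map hX.aemeasurable (hlaw ▸ ae_nonneg_expMeasure_one)
  have hevent : {ω | N₁ * logb 2 (1 + X₁ ω * a) < b₁ ∧
        N₁ * logb 2 (1 + X₁ ω * a) + N₂ * logb 2 (1 + X₂ ω * c) < b₁ + b₂} =ᵐ[μ]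
      (fun ω => (X₁ ω, X₂ ω)) ⁻¹' {p : ℝ × ℝ | p.1 < (T - 1) / a ∧ p.2 < h p.1} := by
    refine eventuallyEq_set.2 ?_
    filter_upwards [hnonneg hX₁ hlaw₁, hnonneg hX₂ hlaw₂] with ω h₁ h₂
    simp only [mem_ofPred_eq, mem_preimage, h]
    rw [outage_two_rounds_iff hN₁ hN₂ (by nlinarith) (by nlinarith), lt_div_iff₀ ha,
      lt_div_iff₀ hc, mul_comm a]
  rw [measure_congr hevent, ← Measure.map_apply (hX₁.prodMk hX₂)
    (measurableSet_fst_lt_and_snd_lt hh), hjoint,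
    prod_expMeasure_fst_lt_and_snd_lt (div_nonneg hT ha.le) hh]
  intro x hx
  refine div_nonneg (secondRoundThreshold_nonneg hN₁ hN₂ hb₂ (by nlinarith [hx.1]) ?_) hc.le
  rw [← le_div_iff₀' ha]
  exact hx.2.le

theorem outage_prob_two_rounds_asymptotic
    {Ω : Type*} [MeasurableSpace Ω] (μ : Measure Ω)
    (X₁ X₂ : Ω → ℝ) (hX₁ : Measurable X₁) (hX₂ : Measurable X₂)
    (hindep : IndepFun X₁ X₂ μ)
    (hlaw₁ : μ.map X₁ = expMeasure 1) (hlaw₂ : μ.map X₂ = expMeasure 1)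
    (σ2 N₁ N₂ b₁ b₂ q₁ q₂ : ℝ) (hσ : 0 < σ2)
    (hN₁ : 0 < N₁) (hN₂ : 0 < N₂) (hNe : N₁ ≠ N₂)
    (hb₁ : 0 < b₁) (hb₂ : 0 < b₂) (hq₁ : 0 < q₁) (hq₂ : 0 < q₂) :
    Tendsto (fun ρ : ℝ =>
        ((q₁ * ρ) * (q₂ * ρ) / σ2 ^ 2) *
          (μ {ω | N₁ * logb 2 (1 + X₁ ω * (q₁ * ρ) / σ2) < b₁ ∧
              N₁ * logb 2 (1 + X₁ ω * (q₁ * ρ) / σ2)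
                + N₂ * logb 2 (1 + X₂ ω * (q₂ * ρ) / σ2) < b₁ + b₂}).toReal)
      atTop
      (nhds ((N₂ / (N₂ - N₁)) * ((2 : ℝ) ^ (b₁ / N₁ + b₂ / N₂)
          - (2 : ℝ) ^ ((b₁ + b₂) / N₂)) - (2 : ℝ) ^ (b₁ / N₁) + 1)) := by
  have hT : 0 ≤ (2 : ℝ) ^ (b₁ / N₁) - 1 :=
    sub_nonneg.2 (one_le_rpow one_le_two (div_nonneg hb₁.le hN₁.le))
  have hsnr : ∀ q, 0 < q → Tendsto (fun ρ => q * ρ / σ2) atTop atTop :=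
    fun q hq => (tendsto_id.const_mul_atTop hq).atTop_div_const hσ
  have hlim := tendsto_integral_mul_one_sub_exp_neg (hsnr q₁ hq₁) (hsnr q₂ hq₂) hT
    (measurable_secondRoundThreshold N₁ N₂ b₁ b₂)
    (fun u hu => secondRoundThreshold_nonneg hN₁ hN₂ hb₂.le (by linarith [hu.1]) hu.2)
    (fun u hu => secondRoundThreshold_le (b₁ := b₁) (b₂ := b₂) hN₁ hN₂ hu.1.le)
  rw [integral_secondRoundThreshold hN₁ hN₂ hNe] at hlim
  refine hlim.congr' ?_
  filter_upwards [eventually_gt_atTop 0] with ρ hρ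
  have ha : 0 < q₁ * ρ / σ2 := by positivity
  have hc : 0 < q₂ * ρ / σ2 := by positivity
  rw [← mul_integral_exp_neg_mul_one_sub_exp ha.ne', ← outage_prob_two_rounds_eq_integral μ hX₁ hX₂
    hindep hlaw₁ hlaw₂ hN₁ hN₂ hb₁.le hb₂.le ha hc]
  simp only [mul_div_assoc]
  ring
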